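/- Let M : [0,τ] → Sym_n(ℝ) be a differentiable function taking values in the n×n real symmetric matrices such that ∂_t M(t) ⪰ M(t)² (in the positive semidefinite order) for all t ∈ [0,τ], and let λ_1, …, λ_n be the eigenvalues of M(0). If λ_i < 1/τ for all i, then ∫₀^τ Tr[M(t)] dt ≥ −Σ_{i=1}^{n} log(1 − τ λ_i). -/

import Mathlib

/-!
For a unit eigenvector `v` of `M 0` with eigenvalue `λ`, the function `g t = v ⬝ᵥ M t *ᵥ v`
satisfies `g' = v ⬝ᵥ M' *ᵥ v ≥ v ⬝ᵥ M² *ᵥ v = ‖M v‖² ≥ g²` by Cauchy–Schwarz. For such a scalar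
`g`, the function `y t = exp (-∫₀ᵗ g)` has `y'' = (g² - g') y ≤ 0`, so `y` lies below its tangent
at `0`: `exp (-∫₀^τ g) ≤ 1 - τ λ`. Summing over an orthonormal eigenbasis of `M 0`, whose
quadratic forms add up to the trace, gives the bound.
-/

open Matrix Set Real

theorem hasDerivAt_integral_of_continuousOn_Icc {g : ℝ → ℝ} {a b t : ℝ}
    (hg : ContinuousOn g (Icc a b)) (ht : t ∈ Ioo a b) :
    HasDerivAt (fun u => ∫ s in a..u, g s) (g t) t :=
  intervalIntegral.integral_hasDerivAt_right
    ((hg.mono (Icc_subset_Icc le_rfl ht.2.le)).intervalIntegrable_of_Icc ht.1.le)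
    ((hg.mono Ioo_subset_Icc_self).stronglyMeasurableAtFilter isOpen_Ioo t ht)
    (hg.continuousAt (Icc_mem_nhds ht.1 ht.2))

theorem le_add_mul_sub_of_hasDerivAt_of_antitoneOn {f f' : ℝ → ℝ} {a b : ℝ} (hab : a ≤ b)
    (hf : ContinuousOn f (Icc a b)) (hf' : ∀ x ∈ Ioo a b, HasDerivAt f (f' x) x)
    (hf'_anti : AntitoneOn f' (Icc a b)) : f b ≤ f a + f' a * (b - a) := by
  rw [← interior_Icc] at hf'
  have hdiffOn : DifferentiableOn ℝ f (interior (Icc a b)) := fun x hx =>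
    (hf' x hx).differentiableAt.differentiableWithinAt
  have hderiv_le : ∀ x ∈ interior (Icc a b), deriv f x ≤ f' a := fun x hx => by
    rw [(hf' x hx).deriv]
    exact hf'_anti (left_mem_Icc.2 hab) (interior_subset hx) (interior_subset hx).1
  linarith [(convex_Icc a b).image_sub_le_mul_sub_of_deriv_le hf hdiffOn hderiv_le
    a (left_mem_Icc.2 hab) b (right_mem_Icc.2 hab) hab]

theorem exp_neg_integral_le_of_sq_le_deriv {g g' : ℝ → ℝ} {τ : ℝ} (hτ : 0 ≤ τ)
    (hg : ContinuousOn g (Icc 0 τ)) (hg' : ∀ t ∈ Ioo 0 τ, HasDerivAt g (g' t) t)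
    (hsq : ∀ t ∈ Ioo 0 τ, g t ^ 2 ≤ g' t) :
    exp (-∫ t in 0..τ, g t) ≤ 1 - τ * g 0 := by
  set y : ℝ → ℝ := fun u => exp (-∫ s in 0..u, g s) with hy
  have hy_cont : ContinuousOn y (Icc 0 τ) := by
    rw [← uIcc_of_le hτ] at hg ⊢
    exact continuous_exp.comp_continuousOn
      (intervalIntegral.continuousOn_primitive_interval hg.integrableOn_uIcc).neg
  have hy' : ∀ t ∈ Ioo 0 τ, HasDerivAt y (-g t * y t) t := fun t ht => by
    simpa [hy, mul_comm] using (hasDerivAt_integral_of_continuousOn_Icc hg ht).neg.exp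
  have hy'' : ∀ t ∈ Ioo 0 τ, HasDerivAt (fun u => -g u * y u) ((g t ^ 2 - g' t) * y t) t :=
    fun t ht => ((hg' t ht).neg.mul (hy' t ht)).congr_deriv (by simp only [Pi.neg_apply]; ring)
  have hy'_anti : AntitoneOn (fun u => -g u * y u) (Icc 0 τ) :=
    antitoneOn_of_hasDerivWithinAt_nonpos (convex_Icc 0 τ) (hg.neg.mul hy_cont)
      (fun t ht => (hy'' t (by rwa [interior_Icc] at ht)).hasDerivWithinAt)
      (fun t ht => mul_nonpos_of_nonpos_of_nonneg
        (sub_nonpos.2 (hsq t (by rwa [interior_Icc] at ht))) (exp_pos _).le)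
  have := le_add_mul_sub_of_hasDerivAt_of_antitoneOn hτ hy_cont hy' hy'_anti
  simp only [hy, intervalIntegral.integral_same, neg_zero, exp_zero] at this
  linarith

theorem neg_log_one_sub_mul_le_integral_of_sq_le_deriv {g g' : ℝ → ℝ} {τ : ℝ} (hτ : 0 ≤ τ)
    (hg : ContinuousOn g (Icc 0 τ)) (hg' : ∀ t ∈ Ioo 0 τ, HasDerivAt g (g' t) t)
    (hsq : ∀ t ∈ Ioo 0 τ, g t ^ 2 ≤ g' t) :
    -log (1 - τ * g 0) ≤ ∫ t in 0..τ, g t := by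
  have hexp := exp_neg_integral_le_of_sq_le_deriv hτ hg hg' hsq
  have hpos : 0 < 1 - τ * g 0 := (exp_pos _).trans_le hexp
  linarith [(le_log_iff_exp_le hpos).2 hexp]

section QuadraticForm

variable {n : Type*} [Fintype n]

theorem hasDerivAt_dotProduct_mulVec {M : ℝ → Matrix n n ℝ} {M' : Matrix n n ℝ} {t : ℝ}
    (hM : ∀ i j, HasDerivAt (fun s => M s i j) (M' i j) t) (u v : n → ℝ) :
    HasDerivAt (fun s => u ⬝ᵥ M s *ᵥ v) (u ⬝ᵥ M' *ᵥ v) t := by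
  simp only [dotProduct, mulVec]
  exact HasDerivAt.fun_sum fun i _ => (HasDerivAt.fun_sum fun j _ =>
    (hM i j).mul_const (v j)).const_mul (u i)

theorem sq_dotProduct_le_dotProduct_self_mul (v w : n → ℝ) :
    (v ⬝ᵥ w) ^ 2 ≤ (v ⬝ᵥ v) * (w ⬝ᵥ w) := by
  simpa only [dotProduct, sq] using Finset.sum_mul_sq_le_sq_mul_sq Finset.univ v w

theorem sq_dotProduct_mulVec_le {A : Matrix n n ℝ} (hA : A.IsSymm) {v : n → ℝ}
    (hv : v ⬝ᵥ v = 1) : (v ⬝ᵥ A *ᵥ v) ^ 2 ≤ v ⬝ᵥ (A * A) *ᵥ v := by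
  have hsq : v ⬝ᵥ (A * A) *ᵥ v = A *ᵥ v ⬝ᵥ A *ᵥ v := by
    rw [← mulVec_mulVec, dotProduct_mulVec, ← vecMul_transpose, hA.eq]
  simpa only [hsq, hv, one_mul] using sq_dotProduct_le_dotProduct_self_mul v (A *ᵥ v)

theorem trace_eq_sum_dotProduct_mulVec {ι : Type*} [Fintype ι] (A : Matrix n n ℝ)
    (b : OrthonormalBasis ι ℝ (EuclideanSpace ℝ n)) :
    A.trace = ∑ i, ⇑(b i) ⬝ᵥ A *ᵥ ⇑(b i) := by
  classical
  have htrace : LinearMap.trace ℝ _ (toLpLin 2 2 A) = A.trace := by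
    rw [toLpLin_eq_toLin, LinearMap.trace_eq_matrix_trace ℝ (PiLp.basisFun 2 ℝ n),
      LinearMap.toMatrix_toLin]
  rw [← htrace, LinearMap.trace_eq_sum_inner _ b]
  refine Finset.sum_congr rfl fun i _ => ?_
  rw [EuclideanSpace.inner_eq_star_dotProduct, toLpLin_apply]
  simp [dotProduct_comm]

end QuadraticForm

section MatrixRiccati

variable {n : Type*} [Fintype n] {τ : ℝ} {M : ℝ → Matrix n n ℝ}

theorem continuousOn_dotProduct_mulVec
    (hdiff : ∀ t ∈ Icc 0 τ, ∀ i j, DifferentiableAt ℝ (fun s => M s i j) t) (u v : n → ℝ) :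
    ContinuousOn (fun t => u ⬝ᵥ M t *ᵥ v) (Icc 0 τ) := fun t ht =>
  (hasDerivAt_dotProduct_mulVec (fun i j => (hdiff t ht i j).hasDerivAt) u v).continuousAt
    |>.continuousWithinAt

theorem neg_log_one_sub_mul_le_integral_dotProduct_mulVec (hτ : 0 ≤ τ)
    (hsymm : ∀ t ∈ Icc 0 τ, (M t).IsSymm)
    (hdiff : ∀ t ∈ Icc 0 τ, ∀ i j, DifferentiableAt ℝ (fun s => M s i j) t)
    (hineq : ∀ t ∈ Icc 0 τ,
      ((Matrix.of fun i j => deriv (fun s => M s i j) t) - M t * M t).PosSemidef)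
    {v : n → ℝ} (hv : v ⬝ᵥ v = 1) :
    -log (1 - τ * (v ⬝ᵥ M 0 *ᵥ v)) ≤ ∫ t in 0..τ, v ⬝ᵥ M t *ᵥ v := by
  refine neg_log_one_sub_mul_le_integral_of_sq_le_deriv hτ
    (continuousOn_dotProduct_mulVec hdiff v v)
    (g' := fun t => v ⬝ᵥ (Matrix.of fun i j => deriv (fun s => M s i j) t) *ᵥ v)
    (fun t ht => hasDerivAt_dotProduct_mulVec
      (fun i j => (hdiff t (Ioo_subset_Icc_self ht) i j).hasDerivAt) v v) fun t ht => ?_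
  have hpsd := (hineq t (Ioo_subset_Icc_self ht)).dotProduct_mulVec_nonneg v
  rw [sub_mulVec, dotProduct_sub, star_trivial, sub_nonneg] at hpsd
  exact (sq_dotProduct_mulVec_le (hsymm t (Ioo_subset_Icc_self ht)) hv).trans hpsd

end MatrixRiccati

/-- Corollary: integrated trace bound. If
`M : [0,τ] → Sym_n(ℝ)` is differentiable with `∂_t M(t) ⪰ M(t)²` on `[0,τ]`,
and the eigenvalues `λ_i` of `M(0)` all satisfy `λ_i < 1/τ`, then
`∫₀^τ Tr[M(t)] dt ≥ −∑ᵢ log(1 − τ λ_i)`. -/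
theorem matrix_diff_ineq_integrated_trace_bound
    {n : ℕ} (τ : ℝ) (hτ : 0 < τ)
    (M : ℝ → Matrix (Fin n) (Fin n) ℝ)
    (hsymm : ∀ t ∈ Set.Icc (0:ℝ) τ, (M t).IsSymm)
    (hdiff : ∀ t ∈ Set.Icc (0:ℝ) τ, ∀ i j : Fin n,
      DifferentiableAt ℝ (fun s => M s i j) t)
    (hineq : ∀ t ∈ Set.Icc (0:ℝ) τ,
      ((Matrix.of fun i j => deriv (fun s => M s i j) t) - M t * M t).PosSemidef) :
    ∀ (h0 : (M 0).IsHermitian),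
      (∀ i : Fin n, h0.eigenvalues i < 1/τ) →
        -(∑ i, Real.log (1 - τ * h0.eigenvalues i)) ≤ ∫ t in (0:ℝ)..τ, (M t).trace := by
  intro h0 _
  set b := h0.eigenvectorBasis
  have hunit : ∀ i, ⇑(b i) ⬝ᵥ ⇑(b i) = 1 := fun i => by
    have h : inner ℝ (b i) (b i) = 1 := by rw [real_inner_self_eq_norm_sq, b.norm_eq_one, one_pow]
    simpa only [EuclideanSpace.inner_eq_star_dotProduct, star_trivial] using h
  have heigen : ∀ i, ⇑(b i) ⬝ᵥ M 0 *ᵥ ⇑(b i) = h0.eigenvalues i := fun i => by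
    rw [h0.mulVec_eigenvectorBasis, dotProduct_smul, hunit, smul_eq_mul, mul_one]
  simp only [trace_eq_sum_dotProduct_mulVec _ b]
  rw [intervalIntegral.integral_finsetSum fun i _ =>
      (continuousOn_dotProduct_mulVec hdiff _ _).intervalIntegrable_of_Icc hτ.le,
    ← Finset.sum_neg_distrib]
  refine Finset.sum_le_sum fun i _ => ?_
  simpa only [heigen] using
    neg_log_one_sub_mul_le_integral_dotProduct_mulVec hτ.le hsymm hdiff hineq (hunit i)
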